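/- For all r ≥ 1, all ζ > 0, all integers k ≥ 1, and all integers 1 ≤ ℓ ≤ j, taking ξ = −ζ one has c̃_{j,ℓ} ≤ κ̃₂^ℓ · (ζ/ρ)^{−j} · (j + ℓ − 1)! / ( ℓ! (ℓ−1)! j! ). (Lemma 3.12.) -/

import Mathlib

open MeasureTheory Finset

noncomputable section

/-- ρ = r^{d/2} -/
def rho (d : ℕ) (r : ℝ) : ℝ := r ^ ((d : ℝ) / 2)

/-- tilted cumulant coefficients κ̃_n = d₁ ∫₀¹ e^{ξu/ρ} u^{n-1-d/γ} du -/
def kt (d : ℕ) (γ r ξ : ℝ) (n : ℕ) : ℝ :=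
  (2 - (d : ℝ) / γ) *
    ∫ u in (0:ℝ)..1, Real.exp (ξ * u / rho d r) * u ^ ((n : ℝ) - 1 - (d : ℝ) / γ)

/-- c̃_{j,ℓ} = (1/ℓ!) ∑_{3 ≤ nᵢ ≤ k+2, ∑(nᵢ−2)=j} ∏ᵢ κ̃_{nᵢ}/nᵢ! -/
def ctilde (d : ℕ) (γ r ξ : ℝ) (k j l : ℕ) : ℝ :=
  (1 / (l.factorial : ℝ)) *
    ∑ n ∈ (Fintype.piFinset fun _ : Fin l => Finset.Icc 3 (k + 2)).filter
        (fun n => ∑ i, (n i - 2) = j),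
      ∏ i, kt d γ r ξ (n i) / ((n i).factorial : ℝ)

/-!
Integration by parts gives `(ζ/ρ) κ̃_{n+1} = (n - d/γ) κ̃_n - d₁ e^{-ζ/ρ}`, hence
`(ζ/ρ)^{n-2} κ̃_n ≤ n! κ̃₂` by induction, so every summand of `c̃_{j,ℓ}` is at most
`κ̃₂^ℓ (ζ/ρ)^{-j}`.
Subtracting 2 from each `nᵢ` maps the index set injectively into the compositions of `j` into `ℓ`
nonnegative parts, of which there are `C(j+ℓ-1, j)` by stars and bars.
-/

open scoped Nat

lemma integral_exp_mul_rpow_by_parts (a : ℝ) {p : ℝ} (hp : 1 ≤ p) :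
    a * ∫ u in (0:ℝ)..1, Real.exp (-a * u) * u ^ p
      = p * (∫ u in (0:ℝ)..1, Real.exp (-a * u) * u ^ (p - 1)) - Real.exp (-a) := by
  have hexp : ∀ u : ℝ, HasDerivAt (fun u => Real.exp (-a * u)) (Real.exp (-a * u) * -a) u :=
    fun u => by simpa using ((hasDerivAt_id u).const_mul (-a)).exp
  have hpow : ∀ u : ℝ, HasDerivAt (fun u : ℝ => u ^ p) (p * u ^ (p - 1)) u :=
    fun u => Real.hasDerivAt_rpow_const (Or.inr hp)
  have hcont : ∀ q : ℝ, 0 ≤ q → Continuous fun u : ℝ => Real.exp (-a * u) * u ^ q :=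
    fun q hq => by fun_prop (disch := exact hq)
  have hparts := intervalIntegral.integral_deriv_mul_eq_sub (a := 0) (b := 1)
    (fun u _ => hexp u) (fun u _ => hpow u) ((by fun_prop : Continuous _).intervalIntegrable 0 1)
    ((by fun_prop (disch := linarith) : Continuous fun u : ℝ => p * u ^ (p - 1)).intervalIntegrable
      0 1)
  have hsplit : (fun u : ℝ =>
        Real.exp (-a * u) * -a * u ^ p + Real.exp (-a * u) * (p * u ^ (p - 1)))
      = fun u => -a * (Real.exp (-a * u) * u ^ p) + p * (Real.exp (-a * u) * u ^ (p - 1)) := by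
    ext u; ring
  rw [hsplit, intervalIntegral.integral_add
      (((hcont p (by linarith)).intervalIntegrable 0 1).const_mul _)
      (((hcont (p - 1) (by linarith)).intervalIntegrable 0 1).const_mul _),
    intervalIntegral.integral_const_mul, intervalIntegral.integral_const_mul] at hparts
  simp only [mul_one, mul_zero, Real.one_rpow, Real.zero_rpow (by linarith : p ≠ 0), sub_zero]
    at hparts
  linarith

lemma card_filter_sum_tsub_le_choose {l c j : ℕ} {s : Finset ℕ} (hs : ∀ x ∈ s, c ≤ x) :
    #((Fintype.piFinset fun _ : Fin l => s).filter fun n => ∑ i, (n i - c) = j)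
      ≤ (l + j - 1).choose j := by
  calc _ ≤ #((univ : Finset (Fin l)).finsuppAntidiag j) := by
        refine card_le_card_of_injOn (fun n => Finsupp.equivFunOnFinite.symm fun i => n i - c)
          (fun n hn => ?_) (fun n hn m hm hnm => ?_)
        · simpa using (mem_filter.1 hn).2
        · funext i
          have hni := hs _ (Fintype.mem_piFinset.1 (mem_filter.1 hn).1 i)
          have hmi := hs _ (Fintype.mem_piFinset.1 (mem_filter.1 hm).1 i)
          have := DFunLike.congr_fun hnm i
          simp only [Finsupp.coe_equivFunOnFinite_symm] at this
          omega
    _ = (l + j - 1).choose j := by simp [card_finsuppAntidiag_nat_eq_choose]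

lemma rho_pos (d : ℕ) {r : ℝ} (hr : 0 < r) : 0 < rho d r := Real.rpow_pos_of_pos hr _

lemma kt_nonneg {d : ℕ} {γ : ℝ} (hγ : (d : ℝ) < γ) (r ξ : ℝ) (n : ℕ) : 0 ≤ kt d γ r ξ n := by
  have hγ0 : 0 < γ := (Nat.cast_nonneg d).trans_lt hγ
  have : (d : ℝ) / γ < 1 := (div_lt_one hγ0).2 hγ
  refine mul_nonneg (by linarith) (intervalIntegral.integral_nonneg zero_le_one fun u hu => ?_)
  exact mul_nonneg (Real.exp_pos _).le (Real.rpow_nonneg hu.1 _)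

lemma kt_neg_eq (d : ℕ) (γ r ζ : ℝ) (n : ℕ) :
    kt d γ r (-ζ) n = (2 - (d : ℝ) / γ) *
      ∫ u in (0:ℝ)..1, Real.exp (-(ζ / rho d r) * u) * u ^ ((n : ℝ) - 1 - (d : ℝ) / γ) := by
  refine congrArg _ (intervalIntegral.integral_congr fun u _ => ?_)
  ring_nf

lemma kt_neg_succ_eq {d : ℕ} {γ : ℝ} (hγ : (d : ℝ) < γ) (r ζ : ℝ) {n : ℕ} (hn : 2 ≤ n) :
    ζ / rho d r * kt d γ r (-ζ) (n + 1)
      = (n - (d : ℝ) / γ) * kt d γ r (-ζ) n - (2 - (d : ℝ) / γ) * Real.exp (-(ζ / rho d r)) := by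
  have hc : (d : ℝ) / γ < 1 := (div_lt_one ((Nat.cast_nonneg d).trans_lt hγ)).2 hγ
  have hn' : (2 : ℝ) ≤ n := by exact_mod_cast hn
  have hparts := integral_exp_mul_rpow_by_parts (ζ / rho d r) (p := n - d / γ) (by linarith)
  rw [kt_neg_eq, kt_neg_eq, Nat.cast_succ, mul_left_comm, add_sub_cancel_right,
    show (n : ℝ) - 1 - d / γ = n - d / γ - 1 by ring, hparts]
  ring

lemma pow_mul_kt_neg_le_factorial_mul {d : ℕ} {γ : ℝ} (hγ : (d : ℝ) < γ) {r ζ : ℝ}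
    (ha : 0 ≤ ζ / rho d r) {n : ℕ} (hn : 2 ≤ n) :
    (ζ / rho d r) ^ (n - 2) * kt d γ r (-ζ) n ≤ n ! * kt d γ r (-ζ) 2 := by
  set a := ζ / rho d r
  induction n, hn using Nat.le_induction with
  | base => norm_num; linarith [kt_nonneg hγ r (-ζ) 2]
  | succ n hn ih =>
    have hc : (d : ℝ) / γ < 1 := (div_lt_one ((Nat.cast_nonneg d).trans_lt hγ)).2 hγ
    have hc0 : 0 ≤ (d : ℝ) / γ := div_nonneg (Nat.cast_nonneg d) ((Nat.cast_nonneg d).trans hγ.le)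
    have hstep : a * kt d γ r (-ζ) (n + 1) ≤ (n + 1) * kt d γ r (-ζ) n := by
      rw [kt_neg_succ_eq hγ r ζ hn]
      nlinarith [kt_nonneg hγ r (-ζ) n, Real.exp_pos (-a)]
    calc a ^ (n + 1 - 2) * kt d γ r (-ζ) (n + 1)
        = a ^ (n - 2) * (a * kt d γ r (-ζ) (n + 1)) := by
          rw [show n + 1 - 2 = n - 2 + 1 by omega, pow_succ]; ring
      _ ≤ a ^ (n - 2) * ((n + 1) * kt d γ r (-ζ) n) := by gcongr
      _ = (n + 1) * (a ^ (n - 2) * kt d γ r (-ζ) n) := by ring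
      _ ≤ (n + 1) * (n ! * kt d γ r (-ζ) 2) := by gcongr
      _ = (n + 1)! * kt d γ r (-ζ) 2 := by push_cast [Nat.factorial_succ]; ring

lemma prod_kt_neg_div_factorial_le {d : ℕ} {γ : ℝ} (hγ : (d : ℝ) < γ) {r ζ : ℝ}
    (ha : 0 < ζ / rho d r) {l : ℕ} (n : Fin l → ℕ) (hn : ∀ i, 2 ≤ n i) :
    ∏ i, kt d γ r (-ζ) (n i) / (n i)!
      ≤ kt d γ r (-ζ) 2 ^ l * (ζ / rho d r)⁻¹ ^ ∑ i, (n i - 2) := by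
  calc ∏ i, kt d γ r (-ζ) (n i) / (n i)!
      ≤ ∏ i, kt d γ r (-ζ) 2 * (ζ / rho d r)⁻¹ ^ (n i - 2) := by
        refine prod_le_prod (fun i _ => div_nonneg (kt_nonneg hγ r _ _) (by positivity))
          fun i _ => ?_
        rw [inv_pow, ← div_eq_mul_inv, div_le_div_iff₀ (by positivity) (by positivity)]
        linarith [pow_mul_kt_neg_le_factorial_mul hγ ha.le (hn i)]
    _ = kt d γ r (-ζ) 2 ^ l * (ζ / rho d r)⁻¹ ^ ∑ i, (n i - 2) := by
        rw [prod_mul_distrib, prod_const, prod_pow_eq_pow_sum, card_univ, Fintype.card_fin]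

theorem ctilde_lower_bound_general (d : ℕ) (γ : ℝ) (hγ : (d : ℝ) < γ)
    (r : ℝ) (hr : 1 ≤ r) (ζ : ℝ) (hζ : 0 < ζ) (k : ℕ)
    (j l : ℕ) (hl : 1 ≤ l) :
    ctilde d γ r (-ζ) k j l ≤
      (kt d γ r (-ζ) 2) ^ l * (ζ / rho d r) ^ (-(j : ℝ)) *
        ((j + l - 1).factorial : ℝ) /
          ((l.factorial : ℝ) * ((l - 1).factorial : ℝ) * (j.factorial : ℝ)) := by
  set a := ζ / rho d r
  have ha : 0 < a := div_pos hζ (rho_pos d (by linarith))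
  set S := (Fintype.piFinset fun _ : Fin l => Icc 3 (k + 2)).filter fun n => ∑ i, (n i - 2) = j
  have hterm : ∀ n ∈ S, ∏ i, kt d γ r (-ζ) (n i) / (n i)! ≤ kt d γ r (-ζ) 2 ^ l * a⁻¹ ^ j := by
    intro n hn
    obtain ⟨hmem, hsum⟩ := mem_filter.1 hn
    rw [← hsum]
    refine prod_kt_neg_div_factorial_le hγ ha n fun i => ?_
    have := (mem_Icc.1 (Fintype.mem_piFinset.1 hmem i)).1
    omega
  have hcard : #S ≤ (l + j - 1).choose j :=
    card_filter_sum_tsub_le_choose fun x hx => by have := (mem_Icc.1 hx).1; omega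
  calc ctilde d γ r (-ζ) k j l
      ≤ 1 / l ! * (#S • (kt d γ r (-ζ) 2 ^ l * a⁻¹ ^ j)) := by
        rw [ctilde]; gcongr; exact sum_le_card_nsmul _ _ _ hterm
    _ ≤ 1 / l ! * ((l + j - 1).choose j * (kt d γ r (-ζ) 2 ^ l * a⁻¹ ^ j)) := by
        rw [nsmul_eq_mul]; gcongr
        exact mul_nonneg (pow_nonneg (kt_nonneg hγ r _ 2) l) (by positivity)
    _ = _ := by
        rw [Nat.cast_choose ℝ (by omega : j ≤ l + j - 1), Real.rpow_neg ha.le, Real.rpow_natCast,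
          inv_pow, show l + j - 1 - j = l - 1 by omega, add_comm l j]
        field_simp

/-- Lemma 3.12 (lower tail, ξ = −ζ): c̃_{j,ℓ} ≤ κ̃₂^ℓ (ζ/ρ)^{−j} (j+ℓ−1)!/(ℓ!(ℓ−1)!j!). -/
theorem ctilde_lower_bound (d : ℕ) (hd : 1 ≤ d) (γ : ℝ) (hγ : (d : ℝ) < γ)
    (r : ℝ) (hr : 1 ≤ r) (ζ : ℝ) (hζ : 0 < ζ) (k : ℕ) (hk : 1 ≤ k)
    (j l : ℕ) (hl : 1 ≤ l) (hlj : l ≤ j) :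
    ctilde d γ r (-ζ) k j l ≤
      (kt d γ r (-ζ) 2) ^ l * (ζ / rho d r) ^ (-(j : ℝ)) *
        ((j + l - 1).factorial : ℝ) /
          ((l.factorial : ℝ) * ((l - 1).factorial : ℝ) * (j.factorial : ℝ)) :=
  ctilde_lower_bound_general d γ hγ r hr ζ hζ k j l hl
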